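/- arXiv:2104.13350 — 4 statements merged into one kernel-verified Lean document; each statement's English description precedes it below -/
import Mathlib

section
/- Let λ, μ, θ, Δ be positive reals, set ρ := λ/μ and a := exp(−μΔ), and define f(x) := exp(−θx)/(exp(−θx) + exp(−θ(ρ − x))), F₀ := 1/(1 + exp(−θρ)) and F₁ := −2θ·exp(−θρ)/(1 + exp(−θρ))². Suppose L satisfies the nonlinear fixed-point equation ρ − L = L·a + ρ·f(L)·(1 − a) with 0 ≤ L ≤ ρ/2, and suppose L₁ satisfies the linearized fixed-point equation ρ − L₁ = L₁·a + ρ·(F₀ + F₁·L₁)·(1 − a). Then L₁ ≤ L, and consequently the first-order amplitude approximation dominates the true amplitude: ρ/2 − L₁ ≥ ρ/2 − L. -/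
/-!
Writing `σ` for the logistic function, `f(L) = σ(θ(ρ - 2L))` and `F₀ + F₁ L` is its tangent line
in `L` at `L = 0`, i.e. the tangent of `σ` at `θρ` evaluated at `θ(ρ - 2L)`. Since `σ' = σ(1 - σ)`
is decreasing on `[0, ∞)`, `σ` is concave there and lies below its tangents, so `f(L) ≤ F₀ + F₁ L`.
Subtracting the two fixed-point equations gives `(L₁ - L)(1 + a + ρ(1 - a)F₁) = ρ(1 - a)(f(L) - F₀ - F₁ L)`;
the right side is `≤ 0`, and the slope factor is positive because `2xσ(x)(1 - σ(x)) < 1`.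
-/

open Real Set

namespace Real

lemma exp_div_exp_add_exp (x y : ℝ) : exp x / (exp x + exp y) = sigmoid (x - y) := by
  have hy : exp y = exp x * exp (-(x - y)) := by rw [← exp_add]; ring_nf
  rw [sigmoid_def, hy]
  field_simp

lemma sigmoid_mul_one_sub_sigmoid (x : ℝ) :
    sigmoid x * (1 - sigmoid x) = exp (-x) / (1 + exp (-x)) ^ 2 := by
  rw [← sigmoid_neg, ← sigmoid_mul_rexp_neg, sigmoid_def]
  field_simp

lemma antitoneOn_sigmoid_mul_one_sub_sigmoid :
    AntitoneOn (fun x => sigmoid x * (1 - sigmoid x)) (Ici 0) := by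
  intro x hx y _ hxy
  have hhalf : 2⁻¹ ≤ sigmoid x := sigmoid_zero ▸ sigmoid_le hx
  have hmono : sigmoid x ≤ sigmoid y := sigmoid_le hxy
  dsimp only
  nlinarith

lemma sigmoid_le_tangent {s t : ℝ} (hs : 0 ≤ s) (hst : s ≤ t) :
    sigmoid s ≤ sigmoid t + sigmoid t * (1 - sigmoid t) * (s - t) := by
  rcases hst.eq_or_lt with rfl | hlt
  · simp
  obtain ⟨c, hc, hslope⟩ := exists_hasDerivAt_eq_slope sigmoid _ hlt
    continuous_sigmoid.continuousOn fun x _ => hasDerivAt_sigmoid x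
  have hderiv : sigmoid t * (1 - sigmoid t) ≤ sigmoid c * (1 - sigmoid c) :=
    antitoneOn_sigmoid_mul_one_sub_sigmoid (hs.trans hc.1.le) (hs.trans hlt.le) hc.2.le
  rw [eq_div_iff (sub_pos.2 hlt).ne'] at hslope
  nlinarith

lemma two_mul_mul_sigmoid_mul_one_sub_sigmoid_lt_one (x : ℝ) :
    2 * x * (sigmoid x * (1 - sigmoid x)) < 1 := by
  have hq : 0 < 1 - sigmoid x := sub_pos.2 (sigmoid_lt_one x)
  rcases lt_or_ge x 0 with hx | hx
  · nlinarith [mul_pos (sigmoid_pos x) hq]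
  have hexp : (1 - sigmoid x) * (1 + exp x) = 1 := by
    rw [← sigmoid_neg, sigmoid_def, neg_neg]
    field_simp
  have hlinear : 2 * x < 1 + exp x := by nlinarith [quadratic_le_exp_of_nonneg hx]
  calc 2 * x * (sigmoid x * (1 - sigmoid x)) ≤ 2 * x * (1 - sigmoid x) := by
        gcongr
        exact mul_le_of_le_one_left hq.le (sigmoid_le_one x)
    _ < (1 + exp x) * (1 - sigmoid x) := mul_lt_mul_of_pos_right hlinear hq
    _ = 1 := by rw [mul_comm, hexp]

end Real

lemma linearized_fixedPoint_le {ρ a y F₀ F₁ L L₁ : ℝ}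
    (hL : ρ - L = L * a + ρ * y * (1 - a))
    (hL₁ : ρ - L₁ = L₁ * a + ρ * (F₀ + F₁ * L₁) * (1 - a))
    (hy : y ≤ F₀ + F₁ * L) (hρa : 0 ≤ ρ * (1 - a)) (hslope : 0 < 1 + a + ρ * (1 - a) * F₁) :
    L₁ ≤ L := by
  have hdiff : (L₁ - L) * (1 + a + ρ * (1 - a) * F₁) = ρ * (1 - a) * (y - (F₀ + F₁ * L)) := by
    linear_combination hL - hL₁
  have hnonpos : ρ * (1 - a) * (y - (F₀ + F₁ * L)) ≤ 0 :=
    mul_nonpos_of_nonneg_of_nonpos hρa (sub_nonpos.2 hy)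
  exact sub_nonpos.1 (nonpos_of_mul_nonpos_left (hdiff ▸ hnonpos) hslope)

theorem linear_approximation_upper_bound_general (μ θ Δ : ℝ)
    (hμ : 0 < μ) (hθ : 0 < θ) (hΔ : 0 < Δ)
    (ρ a F₀ F₁ L L₁ : ℝ)
    (ha : a = Real.exp (-μ * Δ))
    (hF₀ : F₀ = 1 / (1 + Real.exp (-θ * ρ)))
    (hF₁ : F₁ = -2 * θ * Real.exp (-θ * ρ) / (1 + Real.exp (-θ * ρ)) ^ 2)
    (hL : ρ - L = L * a +
      ρ * (Real.exp (-θ * L) / (Real.exp (-θ * L) + Real.exp (-θ * (ρ - L)))) * (1 - a))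
    (hL0 : 0 ≤ L) (hLhalf : L ≤ ρ / 2)
    (hL₁ : ρ - L₁ = L₁ * a + ρ * (F₀ + F₁ * L₁) * (1 - a)) :
    L₁ ≤ L ∧ ρ / 2 - L ≤ ρ / 2 - L₁ := by
  have ha0 : 0 < a := ha ▸ exp_pos _
  have ha1 : a ≤ 1 := ha ▸ exp_le_one_iff.2 (by nlinarith)
  have hF₀σ : F₀ = sigmoid (θ * ρ) := by rw [hF₀, one_div, sigmoid_def, neg_mul]
  have hF₁σ : F₁ = -2 * θ * (sigmoid (θ * ρ) * (1 - sigmoid (θ * ρ))) := by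
    rw [hF₁, sigmoid_mul_one_sub_sigmoid, neg_mul θ ρ]; ring
  have hfσ : exp (-θ * L) / (exp (-θ * L) + exp (-θ * (ρ - L))) = sigmoid (θ * (ρ - 2 * L)) := by
    rw [exp_div_exp_add_exp]; ring_nf
  have htangent : sigmoid (θ * (ρ - 2 * L)) ≤ F₀ + F₁ * L := by
    have hσ := sigmoid_le_tangent (s := θ * (ρ - 2 * L)) (t := θ * ρ) (by nlinarith) (by nlinarith)
    rw [hF₀σ, hF₁σ]; linarith
  have hslope : 0 < 1 + a + ρ * (1 - a) * F₁ := by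
    have hσ' := two_mul_mul_sigmoid_mul_one_sub_sigmoid_lt_one (θ * ρ)
    rw [hF₁σ]; nlinarith
  have hLL₁ := linearized_fixedPoint_le (hfσ ▸ hL) hL₁ htangent
    (mul_nonneg (by linarith) (by linarith)) hslope
  exact ⟨hLL₁, by linarith⟩

/-- Theorem 2.5: the first-order Taylor approximation of the amplitude is an upper
bound for the actual amplitude, i.e. L₁ ≤ L and hence ρ/2 − L₁ ≥ ρ/2 − L. -/
theorem linear_approximation_upper_bound (lam μ θ Δ : ℝ)
    (hlam : 0 < lam) (hμ : 0 < μ) (hθ : 0 < θ) (hΔ : 0 < Δ)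
    (ρ a F₀ F₁ L L₁ : ℝ)
    (hρ : ρ = lam / μ) (ha : a = Real.exp (-μ * Δ))
    (hF₀ : F₀ = 1 / (1 + Real.exp (-θ * ρ)))
    (hF₁ : F₁ = -2 * θ * Real.exp (-θ * ρ) / (1 + Real.exp (-θ * ρ)) ^ 2)
    (hL : ρ - L = L * a +
      ρ * (Real.exp (-θ * L) / (Real.exp (-θ * L) + Real.exp (-θ * (ρ - L)))) * (1 - a))
    (hL0 : 0 ≤ L) (hLhalf : L ≤ ρ / 2)
    (hL₁ : ρ - L₁ = L₁ * a + ρ * (F₀ + F₁ * L₁) * (1 - a)) :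
    L₁ ≤ L ∧ ρ / 2 - L ≤ ρ / 2 - L₁ :=
  linear_approximation_upper_bound_general μ θ Δ hμ hθ hΔ ρ a F₀ F₁ L L₁ ha hF₀ hF₁ hL hL0 hLhalf
    hL₁
end

section
/- Let m ≥ 1 be a natural number and set N := 2m. Let λ, μ, θ, Δ be positive reals, ρ := λ/μ, a := exp(−μΔ), and let L, U be real numbers. Define the symmetric configuration (Lᵢ, Uᵢ) for i = 1, …, N by (Lᵢ, Uᵢ) := (L, U) for i ≤ m and (Lᵢ, Uᵢ) := (U, L) for i > m. Then the configuration satisfies the N-dimensional steady-state system Uᵢ = Lᵢ·a + ρ·(exp(−θLᵢ)/∑_{j=1}^{N} exp(−θLⱼ))·(1 − a) and Lᵢ = Uᵢ·a + ρ·(exp(−θUᵢ)/∑_{j=1}^{N} exp(−θUⱼ))·(1 − a) for all i, if and only if (L, U) satisfies the two-dimensional steady-state system with scaled arrival rate ρ* := 2ρ/N, namely U = L·a + ρ*·(exp(−θL)/(exp(−θL) + exp(−θU)))·(1 − a) and L = U·a + ρ*·(exp(−θU)/(exp(−θU) + exp(−θL)))·(1 − a). -/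
/-!
A queue of the first half carries `(L, U)` and one of the second half `(U, L)`, so the
configuration is the two-queue configuration `((L, U), (U, L))` with every queue copied `m`
times (indices `Fin 2 × Fin m`). Copying multiplies each normalising sum `∑ⱼ exp (-θ Lⱼ)` by
`m`, which amounts to dividing the arrival rate by `m = N / 2`. In the two-queue system the
equations of the step `U → L` are those of the step `L → U` with the two queues exchanged, so
the four equations collapse to two.
-/

open Real Finset

section UpdateSystem

variable {ι κ τ : Type*} [Fintype ι] [Fintype κ] [Fintype τ]

noncomputable def softmin (θ : ℝ) (x : ι → ℝ) (i : ι) : ℝ :=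
  exp (-θ * x i) / ∑ j, exp (-θ * x j)

/-- `U i` is the solution at time `Δ` of the fluid equation `q' = λ pᵢ - μ q` with `q 0 = L i`,
where `pᵢ = softmin θ L i` is frozen at the last update, `ρ = λ / μ` and `a = exp (-μ Δ)`. -/
def UpdatesTo (ρ a θ : ℝ) (L U : ι → ℝ) : Prop :=
  ∀ i, U i = L i * a + ρ * softmin θ L i * (1 - a)

theorem softmin_comp_equiv (θ : ℝ) (L : κ → ℝ) (e : ι ≃ κ) :
    softmin θ (L ∘ e) = softmin θ L ∘ e := by
  ext i
  simp only [softmin, Function.comp_apply, e.sum_comp (fun k => exp (-θ * L k))]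

theorem softmin_comp_fst (θ : ℝ) (L : κ → ℝ) (x : κ × τ) :
    softmin θ (L ∘ Prod.fst) x = softmin θ L x.1 / Fintype.card τ := by
  simp only [softmin, Function.comp_apply, Fintype.sum_prod_type, sum_const, card_univ,
    nsmul_eq_mul, ← mul_sum, div_div, mul_comm]

theorem updatesTo_comp_equiv_iff (ρ a θ : ℝ) (L U : κ → ℝ) (e : ι ≃ κ) :
    UpdatesTo ρ a θ (L ∘ e) (U ∘ e) ↔ UpdatesTo ρ a θ L U := by
  simp only [UpdatesTo, softmin_comp_equiv, Function.comp_apply]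
  exact e.forall_congr_right (q := fun k => U k = L k * a + ρ * softmin θ L k * (1 - a))

theorem updatesTo_comp_fst_iff [Nonempty τ] (ρ a θ : ℝ) (L U : κ → ℝ) :
    UpdatesTo ρ a θ (L ∘ Prod.fst : κ × τ → ℝ) (U ∘ Prod.fst) ↔
      UpdatesTo (ρ / Fintype.card τ) a θ L U := by
  simp only [UpdatesTo, softmin_comp_fst, Function.comp_apply, Prod.forall, forall_const,
    mul_div_assoc', div_mul_eq_mul_div]

theorem updatesTo_fin_two_iff (ρ a θ x y : ℝ) :
    UpdatesTo ρ a θ ![x, y] ![y, x] ↔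
      (y = x * a + ρ * (exp (-θ * x) / (exp (-θ * x) + exp (-θ * y))) * (1 - a) ∧
       x = y * a + ρ * (exp (-θ * y) / (exp (-θ * y) + exp (-θ * x))) * (1 - a)) := by
  simp only [UpdatesTo, softmin, Fin.forall_fin_two, Fin.sum_univ_two, Matrix.cons_val_zero,
    Matrix.cons_val_one]
  rw [add_comm (exp (-θ * x))]

end UpdateSystem

theorem vecCons_fst_finProdFinEquiv_symm {m : ℕ} {α : Type*} (x y : α) (i : Fin (2 * m)) :
    ![x, y] (finProdFinEquiv.symm i).1 = if (i : ℕ) < m then x else y := by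
  obtain ⟨⟨k, j⟩, rfl⟩ := finProdFinEquiv.surjective i
  rw [Equiv.symm_apply_apply, finProdFinEquiv_apply_val]
  fin_cases k <;> simp

theorem even_case_reduction_general (m : ℕ) (hm : 1 ≤ m) (lam μ θ Δ : ℝ)
    (L U : ℝ) (Lv Uv : Fin (2 * m) → ℝ)
    (hLv : ∀ i : Fin (2 * m), Lv i = if (i : ℕ) < m then L else U)
    (hUv : ∀ i : Fin (2 * m), Uv i = if (i : ℕ) < m then U else L) :
    ((∀ i, Uv i = Lv i * Real.exp (-μ * Δ) +
        (lam / μ) * (Real.exp (-θ * Lv i) / ∑ j, Real.exp (-θ * Lv j)) *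
          (1 - Real.exp (-μ * Δ))) ∧
     (∀ i, Lv i = Uv i * Real.exp (-μ * Δ) +
        (lam / μ) * (Real.exp (-θ * Uv i) / ∑ j, Real.exp (-θ * Uv j)) *
          (1 - Real.exp (-μ * Δ)))) ↔
    (U = L * Real.exp (-μ * Δ) +
        (2 * (lam / μ) / (2 * m : ℕ)) *
          (Real.exp (-θ * L) / (Real.exp (-θ * L) + Real.exp (-θ * U))) *
          (1 - Real.exp (-μ * Δ)) ∧
     L = U * Real.exp (-μ * Δ) +
        (2 * (lam / μ) / (2 * m : ℕ)) *
          (Real.exp (-θ * U) / (Real.exp (-θ * U) + Real.exp (-θ * L))) *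
          (1 - Real.exp (-μ * Δ))) := by
  have : Nonempty (Fin m) := ⟨⟨0, hm⟩⟩
  have hLv' : Lv = (![L, U] ∘ Prod.fst) ∘ finProdFinEquiv.symm :=
    funext fun i => (hLv i).trans (vecCons_fst_finProdFinEquiv_symm L U i).symm
  have hUv' : Uv = (![U, L] ∘ Prod.fst) ∘ finProdFinEquiv.symm :=
    funext fun i => (hUv i).trans (vecCons_fst_finProdFinEquiv_symm U L i).symm
  have hρ : 2 * (lam / μ) / ((2 * m : ℕ) : ℝ) = lam / μ / Fintype.card (Fin m) := by
    rw [Fintype.card_fin, Nat.cast_mul, Nat.cast_two, mul_div_mul_left _ _ two_ne_zero]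
  change UpdatesTo (lam / μ) _ θ Lv Uv ∧ UpdatesTo (lam / μ) _ θ Uv Lv ↔ _
  rw [hLv', hUv', updatesTo_comp_equiv_iff, updatesTo_comp_equiv_iff, updatesTo_comp_fst_iff,
    updatesTo_comp_fst_iff, updatesTo_fin_two_iff, updatesTo_fin_two_iff, hρ, and_comm (a := U = _),
    and_self]

/-- Even-N reduction (Section 3.1): for N = 2m, the symmetric configuration built
from (L, U) solves the N-dimensional steady-state system if and only if (L, U)
solves the two-dimensional system with scaled arrival rate ρ* = 2ρ/N. -/
theorem even_case_reduction (m : ℕ) (hm : 1 ≤ m) (lam μ θ Δ : ℝ)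
    (hlam : 0 < lam) (hμ : 0 < μ) (hθ : 0 < θ) (hΔ : 0 < Δ)
    (L U : ℝ) (Lv Uv : Fin (2 * m) → ℝ)
    (hLv : ∀ i : Fin (2 * m), Lv i = if (i : ℕ) < m then L else U)
    (hUv : ∀ i : Fin (2 * m), Uv i = if (i : ℕ) < m then U else L) :
    ((∀ i, Uv i = Lv i * Real.exp (-μ * Δ) +
        (lam / μ) * (Real.exp (-θ * Lv i) / ∑ j, Real.exp (-θ * Lv j)) *
          (1 - Real.exp (-μ * Δ))) ∧
     (∀ i, Lv i = Uv i * Real.exp (-μ * Δ) +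
        (lam / μ) * (Real.exp (-θ * Uv i) / ∑ j, Real.exp (-θ * Uv j)) *
          (1 - Real.exp (-μ * Δ)))) ↔
    (U = L * Real.exp (-μ * Δ) +
        (2 * (lam / μ) / (2 * m : ℕ)) *
          (Real.exp (-θ * L) / (Real.exp (-θ * L) + Real.exp (-θ * U))) *
          (1 - Real.exp (-μ * Δ)) ∧
     L = U * Real.exp (-μ * Δ) +
        (2 * (lam / μ) / (2 * m : ℕ)) *
          (Real.exp (-θ * U) / (Real.exp (-θ * U) + Real.exp (-θ * L))) *
          (1 - Real.exp (-μ * Δ))) :=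
  even_case_reduction_general m hm lam μ θ Δ L U Lv Uv hLv hUv
end

section
/- Let N ≥ 3 be an odd natural number, let λ, μ, θ, Δ be positive reals, set ρ := λ/μ and a := exp(−μΔ). Suppose the real numbers U₁, L₁, U₂, L₂ satisfy the four steady-state equations U₁ = L₁·a + ρ·exp(−θL₁)/(((N+1)/2)·exp(−θL₁) + ((N−1)/2)·exp(−θU₂))·(1 − a), L₁ = U₁·a + ρ·exp(−θU₁)/(((N+1)/2)·exp(−θU₁) + ((N−1)/2)·exp(−θL₂))·(1 − a), U₂ = L₂·a + ρ·exp(−θL₂)/(((N−1)/2)·exp(−θL₂) + ((N+1)/2)·exp(−θU₁))·(1 − a), and L₂ = U₂·a + ρ·exp(−θU₂)/(((N−1)/2)·exp(−θU₂) + ((N+1)/2)·exp(−θL₁))·(1 − a). Then ((N+1)/2)·U₁ + ((N−1)/2)·L₂ = ρ and ((N+1)/2)·L₁ + ((N−1)/2)·U₂ = ρ. -/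
/-!
Write `p = (N+1)/2`, `q = (N-1)/2` and `a = exp (-μΔ)`. In each pair of equations the two
exponential weights are the shares of one softmax, so `p`-weighted plus `q`-weighted they sum to
one. Hence the totals `X = p U₁ + q L₂` and `Y = p L₁ + q U₂` obey the scalar relaxation
`X = a Y + ρ (1 - a)`, `Y = a X + ρ (1 - a)`, whose only solution for `0 < a < 1` is `X = Y = ρ`.
-/

open Real

lemma weighted_update_add_eq {p q a ρ u l u' l' x y : ℝ} (hD : p * x + q * y ≠ 0)
    (hu : u = l * a + ρ * x / (p * x + q * y) * (1 - a))
    (hl' : l' = u' * a + ρ * y / (q * y + p * x) * (1 - a)) :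
    p * u + q * l' = (p * l + q * u') * a + ρ * (1 - a) := by
  have hD' : q * y + p * x ≠ 0 := by rwa [add_comm]
  rw [hu, hl']
  field_simp
  ring

lemma eq_of_relaxation_pair {a ρ X Y : ℝ} (ha₁ : a ≠ 1) (ha₂ : a ≠ -1)
    (hX : X = Y * a + ρ * (1 - a)) (hY : Y = X * a + ρ * (1 - a)) :
    X = ρ ∧ Y = ρ := by
  have hdiff : (1 + a) * (X - Y) = 0 := by linear_combination hX - hY
  have hsum : (1 - a) * (X + Y - 2 * ρ) = 0 := by linear_combination hX + hY
  have hXY : X - Y = 0 := (mul_eq_zero.mp hdiff).resolve_left fun h => ha₂ (by linarith)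
  have hXYρ : X + Y - 2 * ρ = 0 :=
    (mul_eq_zero.mp hsum).resolve_left fun h => ha₁ (by linarith)
  constructor <;> linarith

lemma mul_exp_add_mul_exp_ne_zero {p q : ℝ} (hp : 0 < p) (hq : 0 ≤ q) (x y : ℝ) :
    p * exp x + q * exp y ≠ 0 :=
  (add_pos_of_pos_of_nonneg (mul_pos hp (exp_pos x)) (mul_nonneg hq (exp_pos y).le)).ne'

theorem odd_case_linear_constraints_general (N : ℕ) (hN : 3 ≤ N)
    (lam μ θ Δ : ℝ) (hμ : 0 < μ) (hΔ : 0 < Δ)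
    (U₁ L₁ U₂ L₂ : ℝ)
    (h1 : U₁ = L₁ * Real.exp (-μ * Δ) +
      (lam / μ) * Real.exp (-θ * L₁) /
        (((N : ℝ) + 1) / 2 * Real.exp (-θ * L₁) + ((N : ℝ) - 1) / 2 * Real.exp (-θ * U₂)) *
        (1 - Real.exp (-μ * Δ)))
    (h2 : L₁ = U₁ * Real.exp (-μ * Δ) +
      (lam / μ) * Real.exp (-θ * U₁) /
        (((N : ℝ) + 1) / 2 * Real.exp (-θ * U₁) + ((N : ℝ) - 1) / 2 * Real.exp (-θ * L₂)) *
        (1 - Real.exp (-μ * Δ)))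
    (h3 : U₂ = L₂ * Real.exp (-μ * Δ) +
      (lam / μ) * Real.exp (-θ * L₂) /
        (((N : ℝ) - 1) / 2 * Real.exp (-θ * L₂) + ((N : ℝ) + 1) / 2 * Real.exp (-θ * U₁)) *
        (1 - Real.exp (-μ * Δ)))
    (h4 : L₂ = U₂ * Real.exp (-μ * Δ) +
      (lam / μ) * Real.exp (-θ * U₂) /
        (((N : ℝ) - 1) / 2 * Real.exp (-θ * U₂) + ((N : ℝ) + 1) / 2 * Real.exp (-θ * L₁)) *
        (1 - Real.exp (-μ * Δ))) :
    ((N : ℝ) + 1) / 2 * U₁ + ((N : ℝ) - 1) / 2 * L₂ = lam / μ ∧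
    ((N : ℝ) + 1) / 2 * L₁ + ((N : ℝ) - 1) / 2 * U₂ = lam / μ := by
  have hN' : (3 : ℝ) ≤ N := by exact_mod_cast hN
  have hp : 0 < ((N : ℝ) + 1) / 2 := by linarith
  have hq : 0 ≤ ((N : ℝ) - 1) / 2 := by linarith
  have ha₁ : exp (-μ * Δ) ≠ 1 := (exp_lt_one_iff.mpr (by nlinarith)).ne
  have ha₂ : exp (-μ * Δ) ≠ -1 := by linarith [exp_pos (-μ * Δ)]
  exact eq_of_relaxation_pair ha₁ ha₂
    (weighted_update_add_eq (mul_exp_add_mul_exp_ne_zero hp hq _ _) h1 h4)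
    (weighted_update_add_eq (mul_exp_add_mul_exp_ne_zero hp hq _ _) h2 h3)

/-- Odd-N case: the four steady-state equations (3.3)–(3.6) imply the two linear
constraints (3.7)–(3.8). -/
theorem odd_case_linear_constraints (N : ℕ) (hN : 3 ≤ N) (hodd : Odd N)
    (lam μ θ Δ : ℝ) (hlam : 0 < lam) (hμ : 0 < μ) (hθ : 0 < θ) (hΔ : 0 < Δ)
    (U₁ L₁ U₂ L₂ : ℝ)
    (h1 : U₁ = L₁ * Real.exp (-μ * Δ) +
      (lam / μ) * Real.exp (-θ * L₁) /
        (((N : ℝ) + 1) / 2 * Real.exp (-θ * L₁) + ((N : ℝ) - 1) / 2 * Real.exp (-θ * U₂)) *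
        (1 - Real.exp (-μ * Δ)))
    (h2 : L₁ = U₁ * Real.exp (-μ * Δ) +
      (lam / μ) * Real.exp (-θ * U₁) /
        (((N : ℝ) + 1) / 2 * Real.exp (-θ * U₁) + ((N : ℝ) - 1) / 2 * Real.exp (-θ * L₂)) *
        (1 - Real.exp (-μ * Δ)))
    (h3 : U₂ = L₂ * Real.exp (-μ * Δ) +
      (lam / μ) * Real.exp (-θ * L₂) /
        (((N : ℝ) - 1) / 2 * Real.exp (-θ * L₂) + ((N : ℝ) + 1) / 2 * Real.exp (-θ * U₁)) *
        (1 - Real.exp (-μ * Δ)))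
    (h4 : L₂ = U₂ * Real.exp (-μ * Δ) +
      (lam / μ) * Real.exp (-θ * U₂) /
        (((N : ℝ) - 1) / 2 * Real.exp (-θ * U₂) + ((N : ℝ) + 1) / 2 * Real.exp (-θ * L₁)) *
        (1 - Real.exp (-μ * Δ))) :
    ((N : ℝ) + 1) / 2 * U₁ + ((N : ℝ) - 1) / 2 * L₂ = lam / μ ∧
    ((N : ℝ) + 1) / 2 * L₁ + ((N : ℝ) - 1) / 2 * U₂ = lam / μ :=
  odd_case_linear_constraints_general N hN lam μ θ Δ hμ hΔ U₁ L₁ U₂ L₂ h1 h2 h3 h4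
end

section
/- Let N ≥ 3 be an odd natural number, let λ, μ, θ, Δ be positive reals, set ρ := λ/μ and a := exp(−μΔ). Suppose U₁, L₁, U₂, L₂ satisfy the four steady-state equations U₁ = L₁·a + ρ·exp(−θL₁)/(((N+1)/2)·exp(−θL₁) + ((N−1)/2)·exp(−θU₂))·(1 − a), L₁ = U₁·a + ρ·exp(−θU₁)/(((N+1)/2)·exp(−θU₁) + ((N−1)/2)·exp(−θL₂))·(1 − a), U₂ = L₂·a + ρ·exp(−θL₂)/(((N−1)/2)·exp(−θL₂) + ((N+1)/2)·exp(−θU₁))·(1 − a), and L₂ = U₂·a + ρ·exp(−θU₂)/(((N−1)/2)·exp(−θU₂) + ((N+1)/2)·exp(−θL₁))·(1 − a). Then U₁ and L₁ satisfy the reduced two-equation system U₁ = L₁·a + ρ·exp(−θL₁)/(((N+1)/2)·exp(−θL₁) + ((N−1)/2)·exp(−2ρθ/(N−1))·exp(θ·((N+1)/(N−1))·L₁))·(1 − a) and L₁ = U₁·a + ρ·exp(−θU₁)/(((N+1)/2)·exp(−θU₁) + ((N−1)/2)·exp(−2ρθ/(N−1))·exp(θ·((N+1)/(N−1))·U₁))·(1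 − a). -/
/-!
Weight the update equation of a U₁-queue by (N+1)/2 and that of an L₂-queue by (N−1)/2: their
routing shares have a common denominator and add up to one, so
X := (N+1)/2·U₁ + (N−1)/2·L₂ and Y := (N+1)/2·L₁ + (N−1)/2·U₂ satisfy X = aY + ρ(1−a) and
Y = aX + ρ(1−a). As a² ≠ 1 this forces X = Y = ρ, and solving these two relations for U₂ and L₂
turns exp(−θU₂) and exp(−θL₂) into the exponentials of the reduced system.
-/

open Real

theorem weighted_sum_update {m n a ρ x y u v ex ey : ℝ} (hd : m * ex + n * ey ≠ 0)
    (hu : u = x * a + ρ * ex / (m * ex + n * ey) * (1 - a))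
    (hv : v = y * a + ρ * ey / (n * ey + m * ex) * (1 - a)) :
    m * u + n * v = (m * x + n * y) * a + ρ * (1 - a) := by
  rw [add_comm (n * ey)] at hv
  subst hu hv
  field_simp
  ring

theorem eq_of_affine_swap {a ρ X Y : ℝ} (ha : a ^ 2 ≠ 1)
    (hX : X = Y * a + ρ * (1 - a)) (hY : Y = X * a + ρ * (1 - a)) : X = ρ := by
  have h : (1 - a ^ 2) * (X - ρ) = 0 := by linear_combination hX + a * hY
  exact sub_eq_zero.mp ((mul_eq_zero.mp h).resolve_left (sub_ne_zero.mpr ha.symm))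

theorem exp_mul_exp_eq_exp_neg_mul_of_weighted_sum {N ρ θ x y : ℝ} (hN : N ≠ 1)
    (h : (N + 1) / 2 * x + (N - 1) / 2 * y = ρ) :
    exp (-2 * ρ * θ / (N - 1)) * exp (θ * ((N + 1) / (N - 1)) * x) = exp (-θ * y) := by
  have hN' : N - 1 ≠ 0 := sub_ne_zero.mpr hN
  rw [← exp_add]
  congr 1
  field_simp
  linear_combination 2 * θ * h

theorem odd_case_reduced_system_general (N : ℕ) (hN : 3 ≤ N)
    (lam μ θ Δ : ℝ) (hμ : 0 < μ) (hΔ : 0 < Δ)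
    (U₁ L₁ U₂ L₂ : ℝ)
    (h1 : U₁ = L₁ * Real.exp (-μ * Δ) +
      (lam / μ) * Real.exp (-θ * L₁) /
        (((N : ℝ) + 1) / 2 * Real.exp (-θ * L₁) + ((N : ℝ) - 1) / 2 * Real.exp (-θ * U₂)) *
        (1 - Real.exp (-μ * Δ)))
    (h2 : L₁ = U₁ * Real.exp (-μ * Δ) +
      (lam / μ) * Real.exp (-θ * U₁) /
        (((N : ℝ) + 1) / 2 * Real.exp (-θ * U₁) + ((N : ℝ) - 1) / 2 * Real.exp (-θ * L₂)) *
        (1 - Real.exp (-μ * Δ)))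
    (h3 : U₂ = L₂ * Real.exp (-μ * Δ) +
      (lam / μ) * Real.exp (-θ * L₂) /
        (((N : ℝ) - 1) / 2 * Real.exp (-θ * L₂) + ((N : ℝ) + 1) / 2 * Real.exp (-θ * U₁)) *
        (1 - Real.exp (-μ * Δ)))
    (h4 : L₂ = U₂ * Real.exp (-μ * Δ) +
      (lam / μ) * Real.exp (-θ * U₂) /
        (((N : ℝ) - 1) / 2 * Real.exp (-θ * U₂) + ((N : ℝ) + 1) / 2 * Real.exp (-θ * L₁)) *
        (1 - Real.exp (-μ * Δ))) :
    (U₁ = L₁ * Real.exp (-μ * Δ) +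
      (lam / μ) * Real.exp (-θ * L₁) /
        (((N : ℝ) + 1) / 2 * Real.exp (-θ * L₁) +
          ((N : ℝ) - 1) / 2 * Real.exp (-2 * (lam / μ) * θ / ((N : ℝ) - 1)) *
            Real.exp (θ * (((N : ℝ) + 1) / ((N : ℝ) - 1)) * L₁)) *
        (1 - Real.exp (-μ * Δ))) ∧
    (L₁ = U₁ * Real.exp (-μ * Δ) +
      (lam / μ) * Real.exp (-θ * U₁) /
        (((N : ℝ) + 1) / 2 * Real.exp (-θ * U₁) +
          ((N : ℝ) - 1) / 2 * Real.exp (-2 * (lam / μ) * θ / ((N : ℝ) - 1)) *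
            Real.exp (θ * (((N : ℝ) + 1) / ((N : ℝ) - 1)) * U₁)) *
        (1 - Real.exp (-μ * Δ))) := by
  have hN1 : (1 : ℝ) < N := by exact_mod_cast (by omega : 1 < N)
  have ha : exp (-μ * Δ) ^ 2 ≠ 1 := by
    have ha1 : exp (-μ * Δ) < 1 := exp_lt_one_iff.mpr (by nlinarith)
    have ha0 := exp_pos (-μ * Δ)
    nlinarith
  have hd (s t : ℝ) : ((N : ℝ) + 1) / 2 * exp s + ((N : ℝ) - 1) / 2 * exp t ≠ 0 :=
    (add_pos (by positivity) (mul_pos (by linarith) (exp_pos t))).ne'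
  have hX := weighted_sum_update (hd _ _) h1 h4
  have hY := weighted_sum_update (hd _ _) h2 h3
  have hU₂ := exp_mul_exp_eq_exp_neg_mul_of_weighted_sum (θ := θ) hN1.ne'
    (eq_of_affine_swap ha hY hX)
  have hL₂ := exp_mul_exp_eq_exp_neg_mul_of_weighted_sum (θ := θ) hN1.ne'
    (eq_of_affine_swap ha hX hY)
  simp only [mul_assoc (((N : ℝ) - 1) / 2), hU₂, hL₂]
  exact ⟨h1, h2⟩

/-- Odd-N case: the four steady-state equations (3.3)–(3.6) imply the reduced
two-equation system (3.11)–(3.12) in U₁ and L₁. -/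
theorem odd_case_reduced_system (N : ℕ) (hN : 3 ≤ N) (hodd : Odd N)
    (lam μ θ Δ : ℝ) (hlam : 0 < lam) (hμ : 0 < μ) (hθ : 0 < θ) (hΔ : 0 < Δ)
    (U₁ L₁ U₂ L₂ : ℝ)
    (h1 : U₁ = L₁ * Real.exp (-μ * Δ) +
      (lam / μ) * Real.exp (-θ * L₁) /
        (((N : ℝ) + 1) / 2 * Real.exp (-θ * L₁) + ((N : ℝ) - 1) / 2 * Real.exp (-θ * U₂)) *
        (1 - Real.exp (-μ * Δ)))
    (h2 : L₁ = U₁ * Real.exp (-μ * Δ) +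
      (lam / μ) * Real.exp (-θ * U₁) /
        (((N : ℝ) + 1) / 2 * Real.exp (-θ * U₁) + ((N : ℝ) - 1) / 2 * Real.exp (-θ * L₂)) *
        (1 - Real.exp (-μ * Δ)))
    (h3 : U₂ = L₂ * Real.exp (-μ * Δ) +
      (lam / μ) * Real.exp (-θ * L₂) /
        (((N : ℝ) - 1) / 2 * Real.exp (-θ * L₂) + ((N : ℝ) + 1) / 2 * Real.exp (-θ * U₁)) *
        (1 - Real.exp (-μ * Δ)))
    (h4 : L₂ = U₂ * Real.exp (-μ * Δ) +
      (lam / μ) * Real.exp (-θ * U₂) /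
        (((N : ℝ) - 1) / 2 * Real.exp (-θ * U₂) + ((N : ℝ) + 1) / 2 * Real.exp (-θ * L₁)) *
        (1 - Real.exp (-μ * Δ))) :
    (U₁ = L₁ * Real.exp (-μ * Δ) +
      (lam / μ) * Real.exp (-θ * L₁) /
        (((N : ℝ) + 1) / 2 * Real.exp (-θ * L₁) +
          ((N : ℝ) - 1) / 2 * Real.exp (-2 * (lam / μ) * θ / ((N : ℝ) - 1)) *
            Real.exp (θ * (((N : ℝ) + 1) / ((N : ℝ) - 1)) * L₁)) *
        (1 - Real.exp (-μ * Δ))) ∧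
    (L₁ = U₁ * Real.exp (-μ * Δ) +
      (lam / μ) * Real.exp (-θ * U₁) /
        (((N : ℝ) + 1) / 2 * Real.exp (-θ * U₁) +
          ((N : ℝ) - 1) / 2 * Real.exp (-2 * (lam / μ) * θ / ((N : ℝ) - 1)) *
            Real.exp (θ * (((N : ℝ) + 1) / ((N : ℝ) - 1)) * U₁)) *
        (1 - Real.exp (-μ * Δ))) :=
  odd_case_reduced_system_general N hN lam μ θ Δ hμ hΔ U₁ L₁ U₂ L₂ h1 h2 h3 h4
end
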